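/- For the parabola y = x² in the real plane with blue focus F_b = (0, 1/4) and blue directrix l_b: y = −1/4, the red focus F_r and red directrix l_r (a point F and line l not through F with Q_r(X,F) = Q_r(X,l) for all X on the parabola) exist, and F_b lies on l_r while F_r lies on l_b, and l_b and l_r are green-perpendicular. -/

import Mathlib

/-! The red focus is `(0, -1/4)` and the red directrix is `y = 1/4`, the reflections of the blue
ones in the `x`-axis. Red altitudes to a horizontal line are vertical, so the red quadrance from
`(x, x²)` to `y = 1/4` is `-(1/4 - x²)²`; and `x² - (x² + 1/4)² = -(1/4 - x²)²` is the red
quadrance to `(0, -1/4)`. -/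

/-- Red quadrance between two points of the real plane. -/
def Qr (X Y : ℝ × ℝ) : ℝ :=
  (Y.1 - X.1) ^ 2 - (Y.2 - X.2) ^ 2

/-- Red dot product of two vectors. -/
def redDot (u v : ℝ × ℝ) : ℝ :=
  u.1 * v.1 - u.2 * v.2

/-- Green dot product of two vectors. -/
def greenDot (u v : ℝ × ℝ) : ℝ :=
  u.1 * v.2 + v.1 * u.2

theorem fst_eq_zero_of_redDot_horizontal {u : ℝ × ℝ} {c : ℝ} (hc : c ≠ 0)
    (h : redDot u (c, 0) = 0) : u.1 = 0 := by
  simpa [redDot, hc] using h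

theorem Qr_of_fst_eq {X Y : ℝ × ℝ} (h : Y.1 = X.1) : Qr X Y = -(Y.2 - X.2) ^ 2 := by
  simp [Qr, h]

theorem Qr_parabola_redFocus (x : ℝ) : Qr (x, x ^ 2) (0, -(1 / 4)) = -(1 / 4 - x ^ 2) ^ 2 := by
  simp only [Qr]
  ring

/-- For the parabola `y = x²` (with blue focus `(0,1/4)` and blue directrix
`y = -1/4`) there is a red focus `Fr` and a red directrix `lr : a x + b y + c = 0`
not through `Fr`, so that every point `X` of the parabola has its red quadrance
to `Fr` equal to its red quadrance to the foot of the red altitude from `X` to `lr`;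
moreover the blue focus lies on `lr`, `Fr` lies on the blue directrix, and the
blue and red directrices are green-perpendicular. -/
theorem parabola_red_focus_directrix :
    ∃ (Fr : ℝ × ℝ) (a b c : ℝ),
      (a, b) ≠ ((0 : ℝ), (0 : ℝ)) ∧
      a * Fr.1 + b * Fr.2 + c ≠ 0 ∧
      (∀ x : ℝ, ∀ Foot : ℝ × ℝ,
        a * Foot.1 + b * Foot.2 + c = 0 →
        redDot (Foot.1 - x, Foot.2 - x ^ 2) (-b, a) = 0 →
        Qr (x, x ^ 2) Fr = Qr (x, x ^ 2) Foot) ∧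
      a * 0 + b * (1 / 4 : ℝ) + c = 0 ∧
      Fr.2 = -(1 / 4 : ℝ) ∧
      greenDot (1, 0) (-b, a) = 0 := by
  refine ⟨(0, -(1 / 4)), 0, 1, -(1 / 4), by simp, by norm_num, ?_, by norm_num, rfl,
    by simp [greenDot]⟩
  intro x Foot hline halt
  have hFoot₂ : Foot.2 = 1 / 4 := by linarith
  have hFoot₁ : Foot.1 = x :=
    sub_eq_zero.mp (fst_eq_zero_of_redDot_horizontal (neg_ne_zero.mpr one_ne_zero) halt)
  rw [Qr_parabola_redFocus, Qr_of_fst_eq hFoot₁, hFoot₂]
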